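/- arXiv:1504.07907 — 4 statements merged into one kernel-verified Lean document; each statement's English description precedes it below -/
import Mathlib

section
/- Let F be a symmetric fourth-order tensor on ℝⁿ with multilinear form F⁴(x,y,z,t) = Σ_{i,j,k,l=1}^n F_{ijkl} x_i y_j z_k t_l and score function S⁴(x) = F⁴(x,x,x,x). Then S⁴ : ℝⁿ → ℝ is convex if and only if F⁴(x,x,y,y) ≥ 0 for all x,y ∈ ℝⁿ. -/
/-- A fourth-order tensor is symmetric if its entries are invariant under any
permutation of the indices. -/
def Sym4 {n : ℕ} (F : Fin n → Fin n → Fin n → Fin n → ℝ) : Prop :=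
  ∀ (σ : Equiv.Perm (Fin 4)) (v : Fin 4 → Fin n),
    F (v (σ 0)) (v (σ 1)) (v (σ 2)) (v (σ 3)) = F (v 0) (v 1) (v 2) (v 3)

/-- The multilinear form associated to a fourth-order tensor. -/
def mform4 {n : ℕ} (F : Fin n → Fin n → Fin n → Fin n → ℝ)
    (x y z t : Fin n → ℝ) : ℝ :=
  ∑ i, ∑ j, ∑ k, ∑ l, F i j k l * x i * y j * z k * t l

/-!
Convexity on a vector space is convexity along every line. Along the line `x + t • v` the score
`S⁴` is a quartic polynomial in `t` whose second derivative is `12 F⁴(x + t v, x + t v, v, v)`,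
so `S⁴` is convex iff `F⁴(y, y, v, v) ≥ 0` at every point `y = x + t v` and in every direction `v`.
-/

open Set

theorem convexOn_univ_iff_forall_line {𝕜 E β : Type*} [Field 𝕜] [LinearOrder 𝕜]
    [IsStrictOrderedRing 𝕜] [AddCommGroup E] [Module 𝕜 E] [AddCommMonoid β] [PartialOrder β]
    [SMul 𝕜 β] {f : E → β} :
    ConvexOn 𝕜 univ f ↔ ∀ x v : E, ConvexOn 𝕜 univ fun t : 𝕜 => f (x + t • v) := by
  refine ⟨fun hf x v => ⟨convex_univ, fun s _ t _ a b ha hb hab => ?_⟩,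
    fun h => ⟨convex_univ, fun x _ y _ a b ha hb hab => ?_⟩⟩
  · convert hf.2 (mem_univ (x + s • v)) (mem_univ (x + t • v)) ha hb hab using 2
    rw [smul_add, smul_add, add_add_add_comm, ← add_smul, hab, one_smul, smul_smul, smul_smul,
      ← add_smul, smul_eq_mul, smul_eq_mul]
  · have hxy := (h x (y - x)).2 (mem_univ 0) (mem_univ 1) ha hb hab
    simp only [zero_smul, add_zero, one_smul, add_sub_cancel, smul_eq_mul, mul_zero, mul_one,
      zero_add] at hxy
    convert hxy using 2
    obtain rfl : a = 1 - b := eq_sub_of_add_eq hab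
    rw [sub_smul, one_smul, smul_sub]
    abel

theorem convexOn_univ_iff_forall_deriv2_nonneg {f f' f'' : ℝ → ℝ}
    (hf : ∀ x, HasDerivAt f (f' x) x) (hf' : ∀ x, HasDerivAt f' (f'' x) x) :
    ConvexOn ℝ univ f ↔ ∀ x, 0 ≤ f'' x := by
  refine ⟨fun hconv x => (hf' x).nonneg_of_monotone ?_, fun h => ?_⟩
  · have hmono := hconv.monotoneOn_deriv fun y _ => (hf y).differentiableAt
    rw [funext fun y => (hf y).deriv] at hmono
    exact fun a b hab => hmono (mem_univ a) (mem_univ b) hab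
  · exact convexOn_of_hasDerivWithinAt2_nonneg convex_univ
      (continuous_iff_continuousAt.2 fun x => (hf x).continuousAt).continuousOn
      (fun x _ => (hf x).hasDerivWithinAt) (fun x _ => (hf' x).hasDerivWithinAt) fun x _ => h x

theorem hasDerivAt_quartic (A B C D E t : ℝ) :
    HasDerivAt (fun s => A + B * s + C * s ^ 2 + D * s ^ 3 + E * s ^ 4)
      (B + 2 * C * t + 3 * D * t ^ 2 + 4 * E * t ^ 3) t := by
  have := ((((hasDerivAt_const t A).add ((hasDerivAt_id t).const_mul B)).add
    ((hasDerivAt_pow 2 t).const_mul C)).add ((hasDerivAt_pow 3 t).const_mul D)).add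
    ((hasDerivAt_pow 4 t).const_mul E)
  exact this.congr_deriv (by push_cast; ring)

theorem convexOn_univ_quartic_iff (A B C D E : ℝ) :
    ConvexOn ℝ univ (fun s => A + B * s + C * s ^ 2 + D * s ^ 3 + E * s ^ 4) ↔
      ∀ t, 0 ≤ 2 * C + 6 * D * t + 12 * E * t ^ 2 :=
  convexOn_univ_iff_forall_deriv2_nonneg (hasDerivAt_quartic A B C D E) fun t =>
    HasDerivAt.congr_deriv (by simpa using hasDerivAt_quartic B (2 * C) (3 * D) (4 * E) 0 t)
      (by ring)

section Tensor

variable {n : ℕ} {F : Fin n → Fin n → Fin n → Fin n → ℝ}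

theorem Sym4.swap₁₂ (hF : Sym4 F) (i j k l : Fin n) : F i j k l = F j i k l := by
  simpa [Equiv.swap_apply_def] using hF (Equiv.swap 0 1) ![j, i, k, l]

theorem Sym4.swap₂₃ (hF : Sym4 F) (i j k l : Fin n) : F i j k l = F i k j l := by
  simpa [Equiv.swap_apply_def] using hF (Equiv.swap 1 2) ![i, k, j, l]

theorem Sym4.swap₃₄ (hF : Sym4 F) (i j k l : Fin n) : F i j k l = F i j l k := by
  simpa [Equiv.swap_apply_def] using hF (Equiv.swap 2 3) ![i, j, l, k]

theorem mform4_comm₁₂ (hF : Sym4 F) (x y z w : Fin n → ℝ) :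
    mform4 F x y z w = mform4 F y x z w := by
  rw [mform4, mform4, Finset.sum_comm]
  simp only [hF.swap₁₂]
  ac_rfl

theorem mform4_comm₂₃ (hF : Sym4 F) (x y z w : Fin n → ℝ) :
    mform4 F x y z w = mform4 F x z y w := by
  simp only [mform4]
  conv_lhs => enter [2, i]; rw [Finset.sum_comm]
  simp only [hF.swap₂₃]
  ac_rfl

theorem mform4_comm₃₄ (hF : Sym4 F) (x y z w : Fin n → ℝ) :
    mform4 F x y z w = mform4 F x y w z := by
  simp only [mform4]
  conv_lhs => enter [2, i, 2, j]; rw [Finset.sum_comm]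
  simp only [hF.swap₃₄]
  ac_rfl

theorem mform4_add₄ (F : Fin n → Fin n → Fin n → Fin n → ℝ) (x y z a b : Fin n → ℝ) :
    mform4 F x y z (a + b) = mform4 F x y z a + mform4 F x y z b := by
  simp only [mform4, Pi.add_apply, mul_add, Finset.sum_add_distrib]

theorem mform4_smul₄ (F : Fin n → Fin n → Fin n → Fin n → ℝ) (c : ℝ) (x y z a : Fin n → ℝ) :
    mform4 F x y z (c • a) = c * mform4 F x y z a := by
  simp only [mform4, Pi.smul_apply, smul_eq_mul, Finset.mul_sum]
  ac_rfl

/- Ordered rewriting with the three transpositions moves every sum and scalar into the last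
slot, so linearity there is enough to expand. -/
theorem mform4_add_smul_four (hF : Sym4 F) (x v : Fin n → ℝ) (t : ℝ) :
    mform4 F (x + t • v) (x + t • v) (x + t • v) (x + t • v) =
      mform4 F x x x x + 4 * mform4 F x x x v * t + 6 * mform4 F x x v v * t ^ 2
        + 4 * mform4 F x v v v * t ^ 3 + mform4 F v v v v * t ^ 4 := by
  simp only [mform4_add₄, mform4_smul₄, mform4_comm₁₂ hF, mform4_comm₂₃ hF, mform4_comm₃₄ hF]
  ring

theorem mform4_add_smul_two (hF : Sym4 F) (x v : Fin n → ℝ) (t : ℝ) :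
    mform4 F (x + t • v) (x + t • v) v v =
      mform4 F x x v v + 2 * mform4 F x v v v * t + mform4 F v v v v * t ^ 2 := by
  simp only [mform4_add₄, mform4_smul₄, mform4_comm₁₂ hF, mform4_comm₂₃ hF, mform4_comm₃₄ hF]
  ring

theorem convexOn_mform4_line_iff (hF : Sym4 F) (x v : Fin n → ℝ) :
    (ConvexOn ℝ univ fun t : ℝ => mform4 F (x + t • v) (x + t • v) (x + t • v) (x + t • v)) ↔
      ∀ t : ℝ, 0 ≤ mform4 F (x + t • v) (x + t • v) v v := by
  simp only [mform4_add_smul_four hF, convexOn_univ_quartic_iff, mform4_add_smul_two hF]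
  refine forall_congr' fun t => ?_
  constructor <;> intro h <;> linarith

end Tensor

/-- The score function `S⁴(x) = F⁴(x,x,x,x)` of a symmetric fourth-order tensor is convex
if and only if `F⁴(x,x,y,y) ≥ 0` for all `x, y`. -/
theorem stmt_2 {n : ℕ} (F : Fin n → Fin n → Fin n → Fin n → ℝ) (hF : Sym4 F) :
    ConvexOn ℝ Set.univ (fun x : Fin n → ℝ => mform4 F x x x x) ↔
      ∀ x y : Fin n → ℝ, 0 ≤ mform4 F x x y y := by
  simp only [convexOn_univ_iff_forall_line, convexOn_mform4_line_iff hF]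
  exact ⟨fun h x y => by simpa using h x y 0, fun h x v t => h _ _⟩
end

section
/- Let F be a symmetric fourth-order tensor on ℝⁿ with multilinear form F⁴ and convex score function S⁴(x) = F⁴(x,x,x,x). Then for all x,y ∈ ℝⁿ: F⁴(x,x,y,y) ≤ max{ F⁴(x,x,x,x), F⁴(y,y,y,y) }. -/
/-!
Write `S` for the score `S⁴`. Along every line `t ↦ S(u + t w)` is a quartic whose second
derivative at `0` is `12 F⁴(u,u,w,w)`, so convexity of `S` makes `F⁴(u,u,w,w)` nonnegative.
By the parallelogram identity `S(u + w) + S(u - w) = 2 S(u) + 12 F⁴(u,u,w,w) + 2 S(w)`, applied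
to `(x, y)` and to `(x + y, x - y)`, nonnegativity at `(x + y, x - y)` is exactly
`2 F⁴(x,x,y,y) ≤ S(x) + S(y)`.
-/

open Set Filter Topology

theorem nonneg_of_forall_pos_nonneg_add_mul {a b : ℝ} (h : ∀ s > 0, 0 ≤ a + b * s) : 0 ≤ a := by
  have hlim : Tendsto (fun s => a + b * s) (𝓝[>] 0) (𝓝 a) := by
    have : Continuous fun s : ℝ => a + b * s := by fun_prop
    simpa using (this.tendsto 0).mono_left nhdsWithin_le_nhds
  exact ge_of_tendsto hlim (eventually_nhdsWithin_of_forall h)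

variable {n : ℕ} {F : Fin n → Fin n → Fin n → Fin n → ℝ}

namespace Sym4

theorem swap12 (hF : Sym4 F) (i j k l : Fin n) : F j i k l = F i j k l := by
  simpa [Equiv.swap_apply_def] using hF (Equiv.swap 0 1) ![i, j, k, l]

theorem swap23 (hF : Sym4 F) (i j k l : Fin n) : F i k j l = F i j k l := by
  simpa [Equiv.swap_apply_def] using hF (Equiv.swap 1 2) ![i, j, k, l]

theorem swap34 (hF : Sym4 F) (i j k l : Fin n) : F i j l k = F i j k l := by
  simpa [Equiv.swap_apply_def] using hF (Equiv.swap 2 3) ![i, j, k, l]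

end Sym4

theorem mform4_swap12 (hF : Sym4 F) (x y z t : Fin n → ℝ) :
    mform4 F y x z t = mform4 F x y z t := by
  rw [mform4, Finset.sum_comm]
  refine Finset.sum_congr rfl fun i _ => Finset.sum_congr rfl fun j _ =>
    Finset.sum_congr rfl fun k _ => Finset.sum_congr rfl fun l _ => ?_
  rw [hF.swap12]; ring

theorem mform4_swap23 (hF : Sym4 F) (x y z t : Fin n → ℝ) :
    mform4 F x z y t = mform4 F x y z t := by
  refine Finset.sum_congr rfl fun i _ => ?_
  rw [Finset.sum_comm]
  refine Finset.sum_congr rfl fun j _ => Finset.sum_congr rfl fun k _ =>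
    Finset.sum_congr rfl fun l _ => ?_
  rw [hF.swap23]; ring

theorem mform4_swap34 (hF : Sym4 F) (x y z t : Fin n → ℝ) :
    mform4 F x y t z = mform4 F x y z t := by
  refine Finset.sum_congr rfl fun i _ => Finset.sum_congr rfl fun j _ => ?_
  rw [Finset.sum_comm]
  refine Finset.sum_congr rfl fun k _ => Finset.sum_congr rfl fun l _ => ?_
  rw [hF.swap34]; ring

theorem mform4_smul_diag (c : ℝ) (x : Fin n → ℝ) :
    mform4 F (c • x) (c • x) (c • x) (c • x) = c ^ 4 * mform4 F x x x x := by
  simp only [mform4, Pi.smul_apply, smul_eq_mul, Finset.mul_sum]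
  refine Finset.sum_congr rfl fun i _ => Finset.sum_congr rfl fun j _ =>
    Finset.sum_congr rfl fun k _ => Finset.sum_congr rfl fun l _ => ?_
  ring

theorem mform4_diag_add_smul_add_diag_sub_smul (hF : Sym4 F) (u w : Fin n → ℝ) (t : ℝ) :
    mform4 F (u + t • w) (u + t • w) (u + t • w) (u + t • w)
      + mform4 F (u - t • w) (u - t • w) (u - t • w) (u - t • w)
      = 2 * mform4 F u u u u + 12 * t ^ 2 * mform4 F u u w w
        + 2 * t ^ 4 * mform4 F w w w w := by
  have huwuw : mform4 F u w u w = mform4 F u u w w := mform4_swap23 hF u u w w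
  have huwwu : mform4 F u w w u = mform4 F u u w w := by rw [mform4_swap34 hF, huwuw]
  have hwuuw : mform4 F w u u w = mform4 F u u w w := by rw [mform4_swap12 hF, huwuw]
  have hwuwu : mform4 F w u w u = mform4 F u u w w := by rw [mform4_swap12 hF, huwwu]
  have hwwuu : mform4 F w w u u = mform4 F u u w w := by rw [mform4_swap23 hF, hwuwu]
  -- The odd powers of `t` cancel without symmetry; symmetry only merges the six `uuww` terms.
  have hsym : 12 * t ^ 2 * mform4 F u u w w = 2 * t ^ 2 * (mform4 F u u w w
      + mform4 F u w u w + mform4 F u w w u + mform4 F w u u w + mform4 F w u w u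
      + mform4 F w w u u) := by
    rw [huwuw, huwwu, hwuuw, hwuwu, hwwuu]; ring
  rw [hsym]
  simp only [mform4, Pi.add_apply, Pi.sub_apply, Pi.smul_apply, smul_eq_mul, Finset.mul_sum,
    ← Finset.sum_add_distrib]
  refine Finset.sum_congr rfl fun i _ => Finset.sum_congr rfl fun j _ =>
    Finset.sum_congr rfl fun k _ => Finset.sum_congr rfl fun l _ => ?_
  ring

theorem mform4_nonneg_of_convexOn (hF : Sym4 F)
    (hconv : ConvexOn ℝ univ fun x : Fin n → ℝ => mform4 F x x x x) (u w : Fin n → ℝ) :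
    0 ≤ mform4 F u u w w := by
  suffices h : ∀ s > 0, 0 ≤ 6 * mform4 F u u w w + mform4 F w w w w * s by
    linarith [nonneg_of_forall_pos_nonneg_add_mul h]
  intro s hs
  obtain ⟨t, ht, rfl⟩ : ∃ t : ℝ, 0 < t ^ 2 ∧ t ^ 2 = s :=
    ⟨√s, by positivity, Real.sq_sqrt hs.le⟩
  have hmid := hconv.2 (mem_univ (u + t • w)) (mem_univ (u - t • w))
    one_half_pos.le one_half_pos.le (add_halves 1)
  rw [show (1 / 2 : ℝ) • (u + t • w) + (1 / 2 : ℝ) • (u - t • w) = u by module,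
    smul_eq_mul, smul_eq_mul] at hmid
  have hexp := mform4_diag_add_smul_add_diag_sub_smul hF u w t
  refine nonneg_of_mul_nonneg_right (a := t ^ 2) ?_ ht
  linarith

/-- If the score function of a symmetric fourth-order tensor is convex, then
`F⁴(x,x,y,y) ≤ max (F⁴(x,x,x,x)) (F⁴(y,y,y,y))`. -/
theorem stmt_3 {n : ℕ} (F : Fin n → Fin n → Fin n → Fin n → ℝ) (hF : Sym4 F)
    (hconv : ConvexOn ℝ Set.univ (fun x : Fin n → ℝ => mform4 F x x x x)) :
    ∀ x y : Fin n → ℝ,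
      mform4 F x x y y ≤ max (mform4 F x x x x) (mform4 F y y y y) := by
  intro x y
  have hxy := mform4_diag_add_smul_add_diag_sub_smul hF x y 1
  have hsd := mform4_diag_add_smul_add_diag_sub_smul hF (x + y) (x - y) 1
  simp only [one_smul, one_pow, mul_one] at hxy hsd
  rw [add_add_sub_cancel, add_sub_sub_cancel, ← two_smul ℝ x, ← two_smul ℝ y,
    mform4_smul_diag, mform4_smul_diag] at hsd
  have hnonneg := mform4_nonneg_of_convexOn hF hconv (x + y) (x - y)
  linarith [le_max_left (mform4 F x x x x) (mform4 F y y y y),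
    le_max_right (mform4 F x x x x) (mform4 F y y y y)]
end

section
/- Let F be a symmetric fourth-order tensor on ℝⁿ with multilinear form F⁴ and convex score function S⁴(x) = F⁴(x,x,x,x). Then for all x,y,z,t ∈ ℝⁿ: 4 F⁴(x,y,z,t) ≤ F⁴(x,x,z,z) + F⁴(x,x,t,t) + F⁴(y,y,z,z) + F⁴(y,y,t,t). -/
/-!
Midpoint convexity of the score function along `u ± s v` gives
`12 s² F⁴(u,u,v,v) + 2 s⁴ S⁴(v) ≥ 0` for every real `s`, hence `F⁴(u,u,v,v) ≥ 0`
(divide by `s²` and let `s → 0`). Adding these inequalities for the pairs `(x + y, z - t)`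
and `(x - y, z + t)` leaves, by symmetry,
`2 (F⁴(x,x,z,z) + F⁴(x,x,t,t) + F⁴(y,y,z,z) + F⁴(y,y,t,t)) - 8 F⁴(x,y,z,t) ≥ 0`.
-/

open Filter Topology in
theorem nonneg_of_forall_sq_mul_add_pow_four_mul_nonneg {c d : ℝ}
    (h : ∀ s : ℝ, 0 ≤ s ^ 2 * c + s ^ 4 * d) : 0 ≤ c := by
  have hlim : Tendsto (fun s : ℝ => c + s ^ 2 * d) (𝓝[≠] 0) (𝓝 c) := by
    have : Continuous fun s : ℝ => c + s ^ 2 * d := by fun_prop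
    simpa using (this.tendsto 0).mono_left nhdsWithin_le_nhds
  refine ge_of_tendsto hlim (eventually_nhdsWithin_of_forall fun s hs => ?_)
  refine nonneg_of_mul_nonneg_right (a := s ^ 2) ?_ (pow_two_pos_of_ne_zero hs)
  linarith [h s]

-- Adjacent transpositions generate the symmetric group, so these give full symmetry.
structure IsSymm4 {V : Type*} [AddCommGroup V] [Module ℝ V]
    (B : V →ₗ[ℝ] V →ₗ[ℝ] V →ₗ[ℝ] V →ₗ[ℝ] ℝ) : Prop where
  swap₁₂ : ∀ x y z t, B x y z t = B y x z t
  swap₂₃ : ∀ x y z t, B x y z t = B x z y t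
  swap₃₄ : ∀ x y z t, B x y z t = B x y t z

namespace IsSymm4

variable {V : Type*} [AddCommGroup V] [Module ℝ V]
  {B : V →ₗ[ℝ] V →ₗ[ℝ] V →ₗ[ℝ] V →ₗ[ℝ] ℝ}

theorem apply_add_smul_add_apply_add_neg_smul (hB : IsSymm4 B) (u v : V) (s : ℝ) :
    B (u + s • v) (u + s • v) (u + s • v) (u + s • v) +
        B (u + (-s) • v) (u + (-s) • v) (u + (-s) • v) (u + (-s) • v) =
      2 * B u u u u + 12 * s ^ 2 * B u u v v + 2 * s ^ 4 * B v v v v := by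
  have h₁ : B u v u v = B u u v v := hB.swap₂₃ u v u v
  have h₂ : B u v v u = B u u v v := (hB.swap₃₄ u v v u).trans h₁
  have h₃ : B v u u v = B u u v v := (hB.swap₁₂ v u u v).trans h₁
  have h₄ : B v u v u = B u u v v := (hB.swap₁₂ v u v u).trans h₂
  have h₅ : B v v u u = B u u v v := (hB.swap₂₃ v v u u).trans h₄
  simp only [map_add, map_smul, LinearMap.add_apply, LinearMap.smul_apply, smul_eq_mul]
  linear_combination 2 * s ^ 2 * (h₁ + h₂ + h₃ + h₄ + h₅)

theorem apply_apply_nonneg_of_convexOn (hB : IsSymm4 B)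
    (hconv : ConvexOn ℝ Set.univ fun x => B x x x x) (u v : V) : 0 ≤ B u u v v := by
  refine nonneg_of_forall_sq_mul_add_pow_four_mul_nonneg (d := B v v v v / 6) fun s => ?_
  have hmid := hconv.2 (Set.mem_univ (u + s • v)) (Set.mem_univ (u + (-s) • v))
    (by norm_num : (0 : ℝ) ≤ 1 / 2) (by norm_num : (0 : ℝ) ≤ 1 / 2) (by norm_num)
  have hsum : (1 / 2 : ℝ) • (u + s • v) + (1 / 2 : ℝ) • (u + (-s) • v) = u := by module
  simp only [hsum, smul_eq_mul] at hmid
  have hexp := hB.apply_add_smul_add_apply_add_neg_smul u v s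
  linear_combination (1 / 6 : ℝ) * hmid + (1 / 12 : ℝ) * hexp

theorem four_mul_apply_le_of_convexOn (hB : IsSymm4 B)
    (hconv : ConvexOn ℝ Set.univ fun x => B x x x x) (x y z t : V) :
    4 * B x y z t ≤ B x x z z + B x x t t + B y y z z + B y y t t := by
  -- `(-1 : ℝ) •` rather than subtraction: instance search finds no `AddCommGroup` on
  -- `V →ₗ[ℝ] V →ₗ[ℝ] V →ₗ[ℝ] ℝ`, so `map_sub` does not apply to `B`.
  have h₁ := hB.apply_apply_nonneg_of_convexOn hconv (x + y) (z + (-1 : ℝ) • t)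
  have h₂ := hB.apply_apply_nonneg_of_convexOn hconv (x + (-1 : ℝ) • y) (z + t)
  simp only [map_add, map_smul, LinearMap.add_apply, LinearMap.smul_apply, smul_eq_mul] at h₁ h₂
  linarith [hB.swap₁₂ x y z z, hB.swap₁₂ x y z t, hB.swap₁₂ x y t z, hB.swap₁₂ x y t t,
    hB.swap₃₄ x x z t, hB.swap₃₄ x y z t, hB.swap₃₄ y y z t]

end IsSymm4

def mform4Linear {n : ℕ} (F : Fin n → Fin n → Fin n → Fin n → ℝ) :
    (Fin n → ℝ) →ₗ[ℝ] (Fin n → ℝ) →ₗ[ℝ] (Fin n → ℝ) →ₗ[ℝ] (Fin n → ℝ) →ₗ[ℝ] ℝ :=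
  ∑ i, ∑ j, ∑ k, ∑ l, F i j k l • (LinearMap.proj i).smulRight
    ((LinearMap.proj j).smulRight ((LinearMap.proj k).smulRight (LinearMap.proj l)))

@[simp]
theorem mform4Linear_apply {n : ℕ} (F : Fin n → Fin n → Fin n → Fin n → ℝ)
    (x y z t : Fin n → ℝ) :
    mform4Linear F x y z t = mform4 F x y z t := by
  simp [mform4Linear, mform4, LinearMap.sum_apply, mul_assoc]

namespace Sym4

variable {n : ℕ} {F : Fin n → Fin n → Fin n → Fin n → ℝ}

theorem apply_swap₁₂ (hF : Sym4 F) (i j k l : Fin n) : F i j k l = F j i k l := by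
  simpa [Equiv.swap_apply_def] using hF (Equiv.swap 0 1) ![j, i, k, l]

theorem apply_swap₂₃ (hF : Sym4 F) (i j k l : Fin n) : F i j k l = F i k j l := by
  simpa [Equiv.swap_apply_def] using hF (Equiv.swap 1 2) ![i, k, j, l]

theorem apply_swap₃₄ (hF : Sym4 F) (i j k l : Fin n) : F i j k l = F i j l k := by
  simpa [Equiv.swap_apply_def] using hF (Equiv.swap 2 3) ![i, j, l, k]

theorem mform4_swap₁₂ (hF : Sym4 F) (x y z t : Fin n → ℝ) :
    mform4 F x y z t = mform4 F y x z t := by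
  unfold mform4
  rw [Finset.sum_comm]
  refine Finset.sum_congr rfl fun j _ => Finset.sum_congr rfl fun i _ =>
    Finset.sum_congr rfl fun k _ => Finset.sum_congr rfl fun l _ => ?_
  rw [hF.apply_swap₁₂ i j k l]
  ring

theorem mform4_swap₂₃ (hF : Sym4 F) (x y z t : Fin n → ℝ) :
    mform4 F x y z t = mform4 F x z y t := by
  unfold mform4
  refine Finset.sum_congr rfl fun i _ => ?_
  rw [Finset.sum_comm]
  refine Finset.sum_congr rfl fun k _ => Finset.sum_congr rfl fun j _ =>
    Finset.sum_congr rfl fun l _ => ?_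
  rw [hF.apply_swap₂₃ i j k l]
  ring

theorem mform4_swap₃₄ (hF : Sym4 F) (x y z t : Fin n → ℝ) :
    mform4 F x y z t = mform4 F x y t z := by
  unfold mform4
  refine Finset.sum_congr rfl fun i _ => Finset.sum_congr rfl fun j _ => ?_
  rw [Finset.sum_comm]
  refine Finset.sum_congr rfl fun l _ => Finset.sum_congr rfl fun k _ => ?_
  rw [hF.apply_swap₃₄ i j k l]
  ring

theorem isSymm4_mform4Linear (hF : Sym4 F) : IsSymm4 (mform4Linear F) where
  swap₁₂ := by simpa using hF.mform4_swap₁₂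
  swap₂₃ := by simpa using hF.mform4_swap₂₃
  swap₃₄ := by simpa using hF.mform4_swap₃₄

end Sym4

/-- If the score function of a symmetric fourth-order tensor is convex, then
`4 F⁴(x,y,z,t) ≤ F⁴(x,x,z,z) + F⁴(x,x,t,t) + F⁴(y,y,z,z) + F⁴(y,y,t,t)`. -/
theorem stmt_7 {n : ℕ} (F : Fin n → Fin n → Fin n → Fin n → ℝ) (hF : Sym4 F)
    (hconv : ConvexOn ℝ Set.univ (fun x : Fin n → ℝ => mform4 F x x x x)) :
    ∀ x y z t : Fin n → ℝ,
      4 * mform4 F x y z t ≤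
        mform4 F x x z z + mform4 F x x t t + mform4 F y y z z + mform4 F y y t t := by
  simp_rw [← mform4Linear_apply] at hconv ⊢
  exact hF.isSymm4_mform4Linear.four_mul_apply_le_of_convexOn hconv
end

section
/- Let n₁ ≤ n₂ be positive integers and M the set of binary matrices X ∈ {0,1}^{n₁×n₂} with row sums equal to 1 and column sums at most 1, identified with vectors x ∈ {0,1}^{n₁n₂}. Let F³ be a symmetric third-order tensor on ℝ^{n₁n₂} with score S³, and let F⁴ be its lift F⁴_{ijkl} = F³_{ijk} + F³_{ijl} + F³_{ikl} + F³_{jkl}, with score S⁴. Then S⁴(x) = 4 n₁ S³(x) for every x ∈ M; consequently max_{x∈M} S⁴(x) = 4 n₁ · max_{x∈M} S³(x), and a point x ∈ M maximizes S⁴ over M if and only if it maximizes S³ over M. -/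
/-- A third-order tensor is symmetric if its entries are invariant under any
permutation of the indices. -/
def Sym3 {ι : Type*} (F : ι → ι → ι → ℝ) : Prop :=
  ∀ (σ : Equiv.Perm (Fin 3)) (v : Fin 3 → ι),
    F (v (σ 0)) (v (σ 1)) (v (σ 2)) = F (v 0) (v 1) (v 2)

/-- The score function of a third-order tensor. -/
def score3 {ι : Type*} [Fintype ι] (F : ι → ι → ι → ℝ) (x : ι → ℝ) : ℝ :=
  ∑ i, ∑ j, ∑ k, F i j k * x i * x j * x k

/-- The score function of a fourth-order tensor. -/
def score4 {ι : Type*} [Fintype ι] (F : ι → ι → ι → ι → ℝ) (x : ι → ℝ) : ℝ :=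
  ∑ i, ∑ j, ∑ k, ∑ l, F i j k l * x i * x j * x k * x l

/-- The lift of a third-order tensor to a fourth-order tensor:
`F⁴_{ijkl} = F³_{ijk} + F³_{ijl} + F³_{ikl} + F³_{jkl}`. -/
def lift4 {ι : Type*} (F : ι → ι → ι → ℝ) : ι → ι → ι → ι → ℝ := fun i j k l =>
  F i j k + F i j l + F i k l + F j k l

/-- The set of one-to-one assignment matrices, viewed as 0/1 vectors indexed by
`Fin n₁ × Fin n₂`: each row sums to 1 and each column sums to at most 1. -/
def AssignSet (n₁ n₂ : ℕ) : Set (Fin n₁ × Fin n₂ → ℝ) :=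
  {x | (∀ p, x p = 0 ∨ x p = 1) ∧ (∀ i, ∑ j, x (i, j) = 1) ∧ (∀ j, ∑ i, x (i, j) ≤ 1)}


/-! Each of the four summands of `F⁴` omits one of the indices, and summing over that free
index multiplies `S³(x)` by `∑ₗ x l`; hence `S⁴(x) = 4 (∑ₗ x l) S³(x)` for every `x`. On `M`
the row sums are `1`, so `∑ₗ x l = n₁`, and since `4 n₁ > 0` the suprema and the maximizers
correspond. -/

theorem score4_lift4 {ι : Type*} [Fintype ι] (F : ι → ι → ι → ℝ) (x : ι → ℝ) :
    score4 (lift4 F) x = 4 * (∑ l, x l) * score3 F x := by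
  have hterm : ∀ i j k l, lift4 F i j k l * x i * x j * x k * x l =
      (F i j k * x i * x j * x k) * x l + x k * (F i j l * x i * x j * x l)
        + x j * (F i k l * x i * x k * x l) + x i * (F j k l * x j * x k * x l) := by
    intros; simp only [lift4]; ring
  simp only [score4, score3, hterm, Finset.sum_add_distrib, ← Finset.mul_sum, ← Finset.sum_mul]
  ring

theorem sum_eq_of_mem_assignSet {n₁ n₂ : ℕ} {x : Fin n₁ × Fin n₂ → ℝ}
    (hx : x ∈ AssignSet n₁ n₂) : ∑ p, x p = n₁ := by
  simp [Fintype.sum_prod_type, hx.2.1]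

section ConstMul

variable {α : Type*} {f g : α → ℝ} {s : Set α} {c : ℝ}

theorem sSup_image_eq_mul_of_eqOn (hc : 0 ≤ c) (hfg : s.EqOn f (fun x => c * g x)) :
    sSup (f '' s) = c * sSup (g '' s) := by
  rw [Set.image_congr hfg, ← Set.image_image (c * ·) g, ← smul_eq_mul,
    ← Real.sSup_smul_of_nonneg hc]
  rfl

theorem isMaxOn_iff_of_eqOn_mul (hc : 0 < c) (hfg : s.EqOn f (fun x => c * g x)) {a : α}
    (ha : a ∈ s) : IsMaxOn f s a ↔ IsMaxOn g s a := by
  simp only [isMaxOn_iff]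
  refine forall₂_congr fun x hx => ?_
  rw [hfg hx, hfg ha, mul_le_mul_iff_right₀ hc]

end ConstMul

theorem stmt_15_general {n₁ n₂ : ℕ} (h₁ : 0 < n₁)
    (F : Fin n₁ × Fin n₂ → Fin n₁ × Fin n₂ → Fin n₁ × Fin n₂ → ℝ) :
    (∀ x ∈ AssignSet n₁ n₂, score4 (lift4 F) x = 4 * n₁ * score3 F x) ∧
      sSup (score4 (lift4 F) '' AssignSet n₁ n₂) =
        4 * n₁ * sSup (score3 F '' AssignSet n₁ n₂) ∧
      ∀ x ∈ AssignSet n₁ n₂,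
        (IsMaxOn (score4 (lift4 F)) (AssignSet n₁ n₂) x ↔
          IsMaxOn (score3 F) (AssignSet n₁ n₂) x) := by
  have hscore : (AssignSet n₁ n₂).EqOn (score4 (lift4 F)) (fun x => 4 * n₁ * score3 F x) :=
    fun x hx => by rw [score4_lift4, sum_eq_of_mem_assignSet hx]
  have hc : (0 : ℝ) < 4 * n₁ := by positivity
  exact ⟨hscore, sSup_image_eq_mul_of_eqOn hc.le hscore,
    fun x hx => isMaxOn_iff_of_eqOn_mul hc hscore hx⟩

/-- On the set of assignment vectors, `S⁴(x) = 4 n₁ S³(x)`; consequently the maxima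
agree up to the factor `4 n₁` and the maximizers of `S⁴` and `S³` over `M` coincide. -/
theorem stmt_15 {n₁ n₂ : ℕ} (h₁ : 0 < n₁) (h₂ : n₁ ≤ n₂)
    (F : Fin n₁ × Fin n₂ → Fin n₁ × Fin n₂ → Fin n₁ × Fin n₂ → ℝ) (hF : Sym3 F) :
    (∀ x ∈ AssignSet n₁ n₂, score4 (lift4 F) x = 4 * n₁ * score3 F x) ∧
      sSup (score4 (lift4 F) '' AssignSet n₁ n₂) =
        4 * n₁ * sSup (score3 F '' AssignSet n₁ n₂) ∧
      ∀ x ∈ AssignSet n₁ n₂,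
        (IsMaxOn (score4 (lift4 F)) (AssignSet n₁ n₂) x ↔
          IsMaxOn (score3 F) (AssignSet n₁ n₂) x) :=
  stmt_15_general h₁ F
end
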